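/- Let f:[0,∞)→ℝ be superquadratic, concave, and decreasing, let C, D ∈ M_n(ℂ) satisfy C*C + D*D = I, and let A, B be positive semi-definite. Then for each k: λ_k↓(f(C*AC + D*BD)) ≤ λ_k↓(C*f(A)C + D*f(B)D) − f(max{λ₁(A), λ₁(B)} − min{λ_n(A), λ_n(B)}). -/

import Mathlib

open Matrix
open scoped ComplexOrder

/-- A function `f : [0,∞) → ℝ` is superquadratic if for every `t ≥ 0` there is a constant
`C` with `f s ≥ f t + C * (s - t) + f |s - t|` for all `s ≥ 0`. -/
def Superquadratic (f : ℝ → ℝ) : Prop :=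
  ∀ t : ℝ, 0 ≤ t → ∃ C : ℝ, ∀ s : ℝ, 0 ≤ s → f t + C * (s - t) + f |s - t| ≤ f s

/-- Apply a real function to a matrix via the functional calculus (junk value `0` if the
matrix is not Hermitian). -/
noncomputable def mfun {n : ℕ} (f : ℝ → ℝ) (A : Matrix (Fin n) (Fin n) ℂ) :
    Matrix (Fin n) (Fin n) ℂ :=
  if h : A.IsHermitian then h.cfc f else 0

/-- `|A| = √(Aᴴ A)`. -/
noncomputable def matAbs {n : ℕ} (A : Matrix (Fin n) (Fin n) ℂ) : Matrix (Fin n) (Fin n) ℂ :=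
  (Matrix.posSemidef_conjTranspose_mul_self A).isHermitian.eigenvectorUnitary.1 *
    diagonal ((↑) ∘ (√·) ∘ (Matrix.posSemidef_conjTranspose_mul_self A).isHermitian.eigenvalues) *
    (star (Matrix.posSemidef_conjTranspose_mul_self A).isHermitian.eigenvectorUnitary :
      Matrix (Fin n) (Fin n) ℂ)

/-- Largest eigenvalue of a Hermitian matrix (junk value `0` otherwise). -/
noncomputable def lmax {n : ℕ} (A : Matrix (Fin n) (Fin n) ℂ) : ℝ :=
  if h : A.IsHermitian then ⨆ i, h.eigenvalues i else 0

/-- Smallest eigenvalue of a Hermitian matrix (junk value `0` otherwise). -/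
noncomputable def lmin {n : ℕ} (A : Matrix (Fin n) (Fin n) ℂ) : ℝ :=
  if h : A.IsHermitian then ⨅ i, h.eigenvalues i else 0

/-- `k`-th largest eigenvalue (`k = 0` gives the largest) of a Hermitian matrix
(junk value `0` otherwise). -/
noncomputable def lkth {n : ℕ} (A : Matrix (Fin n) (Fin n) ℂ) (k : Fin n) : ℝ :=
  if h : A.IsHermitian then (h.eigenvalues ∘ Tuple.sort h.eigenvalues) k.rev else 0

/-- The quadratic form `⟨Ax, x⟩` as a complex number. -/
noncomputable def qf {n : ℕ} (A : Matrix (Fin n) (Fin n) ℂ) (x : Fin n → ℂ) : ℂ :=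
  star x ⬝ᵥ A *ᵥ x

/-- Löwner order: `A ⊑ B` iff `B - A` is positive semidefinite. -/
def Loewner {n : ℕ} (A B : Matrix (Fin n) (Fin n) ℂ) : Prop :=
  (B - A).PosSemidef


open Complex

variable {n : ℕ}


lemma aux_dot_real (u : Fin n → ℂ) :
    star u ⬝ᵥ u = ((∑ i, normSq (u i) : ℝ) : ℂ) := by
  push_cast
  simp only [dotProduct, Pi.star_apply, Complex.star_def]
  exact Finset.sum_congr rfl fun i _ => (normSq_eq_conj_mul_self).symm

lemma aux_smul_qf (M : Matrix (Fin n) (Fin n) ℂ) (c : ℂ) (x : Fin n → ℂ) :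
    star (c • x) ⬝ᵥ M *ᵥ (c • x) = (starRingEnd ℂ) c * c * (star x ⬝ᵥ M *ᵥ x) := by
  rw [star_smul, Matrix.mulVec_smul, dotProduct_smul, smul_dotProduct]
  simp only [smul_eq_mul, Complex.star_def]
  ring

lemma aux_sandwich (C G : Matrix (Fin n) (Fin n) ℂ) (x : Fin n → ℂ) :
    star x ⬝ᵥ (Cᴴ * G * C) *ᵥ x = star (C *ᵥ x) ⬝ᵥ G *ᵥ (C *ᵥ x) := by
  rw [Matrix.mul_assoc, ← Matrix.mulVec_mulVec, Matrix.dotProduct_mulVec,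
    ← Matrix.star_mulVec, ← Matrix.mulVec_mulVec]

lemma aux_triple (V : Matrix (Fin n) (Fin n) ℂ) (g : Fin n → ℝ) (u : Fin n → ℂ) :
    star u ⬝ᵥ (V * Matrix.diagonal (RCLike.ofReal ∘ g) * star V) *ᵥ u
      = ((∑ i, g i * normSq ((star V *ᵥ u) i) : ℝ) : ℂ) := by
  have h0 : V * Matrix.diagonal (RCLike.ofReal ∘ g) * star V
      = (star V)ᴴ * Matrix.diagonal (RCLike.ofReal ∘ g) * (star V) := by
    rw [Matrix.star_eq_conjTranspose, Matrix.conjTranspose_conjTranspose]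
  rw [h0, aux_sandwich]
  push_cast
  simp only [dotProduct, Pi.star_apply, Matrix.mulVec_diagonal, Function.comp_apply,
    Complex.star_def]
  refine Finset.sum_congr rfl fun i _ => ?_
  rw [show ((normSq ((star V *ᵥ u) i) : ℝ) : ℂ)
    = (starRingEnd ℂ) ((star V *ᵥ u) i) * (star V *ᵥ u) i from normSq_eq_conj_mul_self]
  exact mul_left_comm ((starRingEnd ℂ) ((star V *ᵥ u) i)) (((g i) : ℂ)) ((star V *ᵥ u) i)

lemma aux_unitary_one {V : Matrix (Fin n) (Fin n) ℂ}
    (hV : V ∈ unitary (Matrix (Fin n) (Fin n) ℂ)) (u : Fin n → ℂ) :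
    (∑ i, normSq ((star V *ᵥ u) i)) = ∑ i, normSq (u i) := by
  have h := aux_triple V (fun _ => 1) u
  have h1 : (RCLike.ofReal ∘ fun _ : Fin n => (1:ℝ)) = (fun _ : Fin n => (1:ℂ)) := by
    funext i; simp
  rw [h1, Matrix.diagonal_one, mul_one, Unitary.mul_star_self_of_mem hV, Matrix.one_mulVec,
    aux_dot_real u] at h
  simpa using (Complex.ofReal_injective h).symm

variable {n : ℕ}

lemma aux_ortho {A : Matrix (Fin n) (Fin n) ℂ} (hA : A.IsHermitian) (i j : Fin n) :
    ∑ k, (starRingEnd ℂ) (⇑(hA.eigenvectorBasis i) k) * ⇑(hA.eigenvectorBasis j) k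
      = if i = j then 1 else 0 := by
  have h := congrFun (congrFun (Unitary.coe_star_mul_self (hA.eigenvectorUnitary)) i) j
  rw [Matrix.mul_apply, Matrix.one_apply] at h
  rw [← h]
  refine Finset.sum_congr rfl fun k _ => ?_
  rw [Matrix.star_apply, Matrix.IsHermitian.eigenvectorUnitary_apply,
    Matrix.IsHermitian.eigenvectorUnitary_apply, Complex.star_def]

lemma aux_dot_sum_left {ι : Type*} (s : Finset ι) (f : ι → Fin n → ℂ) (w : Fin n → ℂ) :
    (∑ i ∈ s, f i) ⬝ᵥ w = ∑ i ∈ s, f i ⬝ᵥ w := by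
  simp only [dotProduct, Finset.sum_apply, Finset.sum_mul]
  exact Finset.sum_comm

lemma aux_dot_sum_right {ι : Type*} (s : Finset ι) (w : Fin n → ℂ) (f : ι → Fin n → ℂ) :
    w ⬝ᵥ (∑ i ∈ s, f i) = ∑ i ∈ s, w ⬝ᵥ f i := by
  simp only [dotProduct, Finset.sum_apply, Finset.mul_sum]
  exact Finset.sum_comm

lemma aux_dot_sum {ι : Type*} [Fintype ι] [DecidableEq ι] (v : ι → Fin n → ℂ)
    (hv : ∀ i j, ∑ k, (starRingEnd ℂ) (v i k) * v j k = if i = j then 1 else 0)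
    (c d : ι → ℂ) :
    star (∑ i, c i • v i) ⬝ᵥ (∑ j, d j • v j) = ∑ i, (starRingEnd ℂ) (c i) * d i := by
  have hdot : ∀ i j, star (v i) ⬝ᵥ v j = if i = j then 1 else 0 := by
    intro i j
    rw [← hv i j]
    exact Finset.sum_congr rfl fun k _ => by rw [Pi.star_apply, Complex.star_def]
  rw [star_sum]
  have hs : ∀ i, star (c i • v i) = (starRingEnd ℂ) (c i) • star (v i) := by
    intro i; rw [star_smul]; rfl
  simp only [hs]
  rw [aux_dot_sum_left]
  refine Finset.sum_congr rfl fun i _ => ?_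
  rw [smul_dotProduct, aux_dot_sum_right]
  simp only [dotProduct_smul, hdot, smul_eq_mul, mul_ite, mul_one, mul_zero,
    Finset.sum_ite_eq, Finset.mem_univ, if_true]

lemma aux_real_smul (r : ℝ) (w : Fin n → ℂ) : r • w = ((r : ℂ)) • w := by
  funext k; simp [Complex.real_smul]

lemma aux_linind {A : Matrix (Fin n) (Fin n) ℂ} (hA : A.IsHermitian) (S : Finset (Fin n)) :
    LinearIndependent ℂ (fun i : ↥S => ⇑(hA.eigenvectorBasis ↑i)) := by
  classical
  have hv : ∀ i j : ↥S, ∑ k, (starRingEnd ℂ) (⇑(hA.eigenvectorBasis ↑i) k)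
      * ⇑(hA.eigenvectorBasis ↑j) k = if i = j then 1 else 0 := by
    intro i j
    rw [aux_ortho hA ↑i ↑j]
    exact if_congr Subtype.ext_iff.symm rfl rfl
  rw [Fintype.linearIndependent_iff]
  intro g hg j
  have h := aux_dot_sum (fun i : ↥S => ⇑(hA.eigenvectorBasis ↑i)) hv
    (fun i => if i = j then 1 else 0) g
  rw [hg] at h
  simp only [ite_smul, one_smul, zero_smul, Finset.sum_ite_eq', Finset.mem_univ, if_true] at h
  simp only [apply_ite (starRingEnd ℂ), _root_.map_one, map_zero, ite_mul, one_mul, zero_mul,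
    Finset.sum_ite_eq', Finset.mem_univ, if_true] at h
  rw [dotProduct_zero] at h
  simpa using h.symm

lemma aux_span {A : Matrix (Fin n) (Fin n) ℂ} (hA : A.IsHermitian) (S : Finset (Fin n))
    {x : Fin n → ℂ}
    (hx : x ∈ Submodule.span ℂ (Set.range fun i : ↥S => ⇑(hA.eigenvectorBasis ↑i))) :
    ∃ c : ↥S → ℂ,
      star x ⬝ᵥ A *ᵥ x = ((∑ i : ↥S, hA.eigenvalues ↑i * normSq (c i) : ℝ) : ℂ) ∧
      (∑ j, normSq (x j)) = ∑ i : ↥S, normSq (c i) := by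
  classical
  have hv : ∀ i j : ↥S, ∑ k, (starRingEnd ℂ) (⇑(hA.eigenvectorBasis ↑i) k)
      * ⇑(hA.eigenvectorBasis ↑j) k = if i = j then 1 else 0 := by
    intro i j
    rw [aux_ortho hA ↑i ↑j]
    exact if_congr Subtype.ext_iff.symm rfl rfl
  obtain ⟨c, hc⟩ := (Submodule.mem_span_range_iff_exists_fun ℂ).mp hx
  refine ⟨c, ?_, ?_⟩
  · have hAx : A *ᵥ x = ∑ i : ↥S, ((hA.eigenvalues ↑i : ℂ) * c i) • ⇑(hA.eigenvectorBasis ↑i) := by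
      rw [← hc]
      rw [show A *ᵥ (∑ i : ↥S, c i • ⇑(hA.eigenvectorBasis ↑i))
          = A.mulVecLin (∑ i : ↥S, c i • ⇑(hA.eigenvectorBasis ↑i)) from rfl]
      rw [map_sum]
      refine Finset.sum_congr rfl fun i _ => ?_
      rw [_root_.map_smul, Matrix.mulVecLin_apply, hA.mulVec_eigenvectorBasis, aux_real_smul,
        smul_smul, mul_comm]
    rw [hAx, ← hc, aux_dot_sum _ hv]
    push_cast
    refine Finset.sum_congr rfl fun i _ => ?_
    rw [show ((normSq (c i) : ℝ) : ℂ) = (starRingEnd ℂ) (c i) * c i from normSq_eq_conj_mul_self]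
    ring
  · have h1 : star x ⬝ᵥ x = ((∑ i : ↥S, normSq (c i) : ℝ) : ℂ) := by
      rw [← hc, aux_dot_sum _ hv]
      push_cast
      refine Finset.sum_congr rfl fun i _ => ?_
      rw [show ((normSq (c i) : ℝ) : ℂ) = (starRingEnd ℂ) (c i) * c i from normSq_eq_conj_mul_self]
    rw [aux_dot_real] at h1
    exact_mod_cast h1

lemma aux_superq_bound (f : ℝ → ℝ) (hf : Superquadratic f)
    (hdec : AntitoneOn f (Set.Ici (0 : ℝ))) {ι : Type*} [Fintype ι]
    (w c : ι → ℝ) (hw : ∀ i, 0 ≤ w i) (hsum : ∑ i, w i = 1)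
    (m0 M0 : ℝ) (hm0 : 0 ≤ m0) (hc : ∀ i, c i ∈ Set.Icc m0 M0) :
    f (∑ i, c i * w i) + f (M0 - m0) ≤ ∑ i, f (c i) * w i := by
  set t := ∑ i, c i * w i with ht
  have htle : t ≤ M0 := by
    calc t ≤ ∑ i, M0 * w i := Finset.sum_le_sum fun i _ =>
            mul_le_mul_of_nonneg_right (hc i).2 (hw i)
    _ = M0 := by rw [← Finset.mul_sum, hsum, mul_one]
  have htge : m0 ≤ t := by
    calc (m0 : ℝ) = ∑ i, m0 * w i := by rw [← Finset.mul_sum, hsum, mul_one]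
    _ ≤ t := Finset.sum_le_sum fun i _ => mul_le_mul_of_nonneg_right (hc i).1 (hw i)
  have ht0 : 0 ≤ t := le_trans hm0 htge
  obtain ⟨Ct, hCt⟩ := hf t ht0
  have step1 : ∑ i, (f t + Ct * (c i - t) + f |c i - t|) * w i ≤ ∑ i, f (c i) * w i :=
    Finset.sum_le_sum fun i _ =>
      mul_le_mul_of_nonneg_right (hCt (c i) (le_trans hm0 (hc i).1)) (hw i)
  have expand : ∑ i, (f t + Ct * (c i - t) + f |c i - t|) * w i
      = f t * (∑ i, w i) + Ct * ((∑ i, c i * w i) - t * (∑ i, w i))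
        + ∑ i, f |c i - t| * w i := by
    rw [Finset.mul_sum, Finset.mul_sum, mul_sub, Finset.mul_sum, Finset.mul_sum,
      ← Finset.sum_sub_distrib, ← Finset.sum_add_distrib, ← Finset.sum_add_distrib]
    exact Finset.sum_congr rfl fun i _ => by ring
  have step2 : f (M0 - m0) ≤ ∑ i, f |c i - t| * w i := by
    calc f (M0 - m0) = ∑ i, f (M0 - m0) * w i := by rw [← Finset.mul_sum, hsum, mul_one]
    _ ≤ ∑ i, f |c i - t| * w i := by
        refine Finset.sum_le_sum fun i _ => mul_le_mul_of_nonneg_right ?_ (hw i)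
        refine hdec (Set.mem_Ici.mpr (abs_nonneg _)) (Set.mem_Ici.mpr (by linarith)) ?_
        rw [abs_sub_le_iff]
        constructor
        · linarith [(hc i).2]
        · linarith [(hc i).1]
  calc f t + f (M0 - m0)
      ≤ f t + ∑ i, f |c i - t| * w i := by linarith
    _ = f t * (∑ i, w i) + Ct * ((∑ i, c i * w i) - t * (∑ i, w i))
        + ∑ i, f |c i - t| * w i := by rw [hsum, ← ht]; ring
    _ = ∑ i, (f t + Ct * (c i - t) + f |c i - t|) * w i := expand.symm
    _ ≤ ∑ i, f (c i) * w i := step1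

lemma aux_jensen (f : ℝ → ℝ) (hconc : ConcaveOn ℝ (Set.Ici (0 : ℝ)) f) {ι : Type*} [Fintype ι]
    (w c : ι → ℝ) (hw : ∀ i, 0 ≤ w i) (hsum : ∑ i, w i = 1) (hc : ∀ i, 0 ≤ c i) :
    ∑ i, f (c i) * w i ≤ f (∑ i, c i * w i) := by
  have h := hconc.le_map_sum (t := Finset.univ) (w := w) (p := c)
    (fun i _ => hw i) hsum (fun i _ => Set.mem_Ici.mpr (hc i))
  simpa [smul_eq_mul, mul_comm] using h


lemma aux_eig_compare {A B : Matrix (Fin n) (Fin n) ℂ} (hA : A.IsHermitian)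
    (hB : B.IsHermitian) (c : ℝ)
    (H : ∀ x : Fin n → ℂ, (∑ i, normSq (x i)) = 1 →
      (star x ⬝ᵥ A *ᵥ x).re + c ≤ (star x ⬝ᵥ B *ᵥ x).re) (k : Fin n) :
    lkth A k ≤ lkth B k - c := by
  classical
  set j : Fin n := k.rev with hj
  set pA := Tuple.sort hA.eigenvalues with hpA
  set pB := Tuple.sort hB.eigenvalues with hpB
  set SA : Finset (Fin n) := (Finset.Ici j).image pA with hSA
  set SB : Finset (Fin n) := (Finset.Iic j).image pB with hSB
  set VA := Submodule.span ℂ (Set.range fun i : ↥SA => ⇑(hA.eigenvectorBasis ↑i)) with hVA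
  set VB := Submodule.span ℂ (Set.range fun i : ↥SB => ⇑(hB.eigenvectorBasis ↑i)) with hVB
  have hdimA : Module.finrank ℂ ↥VA = n - (j : ℕ) := by
    rw [hVA, finrank_span_eq_card (aux_linind hA SA), Fintype.card_coe, hSA,
      Finset.card_image_of_injective _ pA.injective, Fin.card_Ici]
  have hdimB : Module.finrank ℂ ↥VB = (j : ℕ) + 1 := by
    rw [hVB, finrank_span_eq_card (aux_linind hB SB), Fintype.card_coe, hSB,
      Finset.card_image_of_injective _ pB.injective, Fin.card_Iic]
  have htot : Module.finrank ℂ (Fin n → ℂ) = n := by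
    rw [Module.finrank_pi]; simp
  have hsup : Module.finrank ℂ ↥(VA ⊔ VB) ≤ n :=
    le_trans (Submodule.finrank_le _) (le_of_eq htot)
  have hkey := Submodule.finrank_sup_add_finrank_inf_eq VA VB
  have hpos : 0 < Module.finrank ℂ ↥(VA ⊓ VB) := by
    have hjn : (j : ℕ) < n := j.isLt
    omega
  have hne : VA ⊓ VB ≠ ⊥ := by
    intro h
    rw [h, finrank_bot] at hpos
    exact lt_irrefl 0 hpos
  obtain ⟨x, hx, hx0⟩ := (Submodule.ne_bot_iff _).mp hne
  obtain ⟨hxA, hxB⟩ := Submodule.mem_inf.mp hx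
  obtain ⟨cA, hcA1, hcA2⟩ := aux_span hA SA hxA
  obtain ⟨cB, hcB1, hcB2⟩ := aux_span hB SB hxB
  set s : ℝ := ∑ i, normSq (x i) with hs
  have hspos : 0 < s := by
    obtain ⟨i0, hi0⟩ := Function.ne_iff.mp hx0
    exact Finset.sum_pos' (fun i _ => normSq_nonneg _)
      ⟨i0, Finset.mem_univ _, Complex.normSq_pos.mpr hi0⟩
  set QA : ℝ := ∑ i : ↥SA, hA.eigenvalues ↑i * normSq (cA i) with hQA
  set QB : ℝ := ∑ i : ↥SB, hB.eigenvalues ↑i * normSq (cB i) with hQB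
  have hlbA : (hA.eigenvalues ∘ pA) j * s ≤ QA := by
    rw [hcA2, Finset.mul_sum]
    refine Finset.sum_le_sum fun i _ => ?_
    obtain ⟨i', hi', hie⟩ := Finset.mem_image.mp i.2
    have : (hA.eigenvalues ∘ pA) j ≤ hA.eigenvalues ↑i := by
      rw [← hie]
      exact Tuple.monotone_sort hA.eigenvalues (Finset.mem_Ici.mp hi')
    exact mul_le_mul_of_nonneg_right this (normSq_nonneg _)
  have hubB : QB ≤ (hB.eigenvalues ∘ pB) j * s := by
    rw [hcB2, Finset.mul_sum]
    refine Finset.sum_le_sum fun i _ => ?_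
    obtain ⟨i', hi', hie⟩ := Finset.mem_image.mp i.2
    have : hB.eigenvalues ↑i ≤ (hB.eigenvalues ∘ pB) j := by
      rw [← hie]
      exact Tuple.monotone_sort hB.eigenvalues (Finset.mem_Iic.mp hi')
    exact mul_le_mul_of_nonneg_right this (normSq_nonneg _)
  set r : ℝ := (Real.sqrt s)⁻¹ with hr
  have hrr : r * r = s⁻¹ := by
    rw [hr, ← mul_inv]
    rw [Real.mul_self_sqrt hspos.le]
  set u : Fin n → ℂ := (r : ℂ) • x with hu
  have hunit : (∑ i, normSq (u i)) = 1 := by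
    have : ∀ i, normSq (u i) = s⁻¹ * normSq (x i) := by
      intro i
      rw [hu, Pi.smul_apply, smul_eq_mul, Complex.normSq_mul, Complex.normSq_ofReal, hrr]
    simp only [this, ← Finset.mul_sum, ← hs]
    exact inv_mul_cancel₀ hspos.ne'
  have hqA : (star u ⬝ᵥ A *ᵥ u).re = s⁻¹ * QA := by
    have : star u ⬝ᵥ A *ᵥ u = ((s⁻¹ * QA : ℝ) : ℂ) := by
      rw [hu, aux_smul_qf, hcA1, ← hrr]
      push_cast [Complex.conj_ofReal]
      ring
    rw [this, Complex.ofReal_re]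
  have hqB : (star u ⬝ᵥ B *ᵥ u).re = s⁻¹ * QB := by
    have : star u ⬝ᵥ B *ᵥ u = ((s⁻¹ * QB : ℝ) : ℂ) := by
      rw [hu, aux_smul_qf, hcB1, ← hrr]
      push_cast [Complex.conj_ofReal]
      ring
    rw [this, Complex.ofReal_re]
  have hH := H u hunit
  rw [hqA, hqB] at hH
  have h1 : (hA.eigenvalues ∘ pA) j ≤ s⁻¹ * QA := by
    have := mul_le_mul_of_nonneg_left hlbA (inv_nonneg.mpr hspos.le)
    calc (hA.eigenvalues ∘ pA) j = s⁻¹ * ((hA.eigenvalues ∘ pA) j * s) := by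
          field_simp
      _ ≤ s⁻¹ * QA := this
  have h2 : s⁻¹ * QB ≤ (hB.eigenvalues ∘ pB) j := by
    have := mul_le_mul_of_nonneg_left hubB (inv_nonneg.mpr hspos.le)
    calc s⁻¹ * QB ≤ s⁻¹ * ((hB.eigenvalues ∘ pB) j * s) := this
      _ = (hB.eigenvalues ∘ pB) j := by field_simp
  simp only [lkth, dif_pos hA, dif_pos hB]
  have : (hA.eigenvalues ∘ pA) j + c ≤ (hB.eigenvalues ∘ pB) j := by linarith
  rw [hpA, hpB] at this
  simp only [hj] at this
  simp only [Function.comp_apply] at this ⊢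
  linarith


lemma aux_cfc_herm {A : Matrix (Fin n) (Fin n) ℂ} (hA : A.IsHermitian) (f : ℝ → ℝ) :
    (hA.cfc f).IsHermitian := by
  rw [Matrix.IsHermitian.cfc]
  have hd : (Matrix.diagonal (RCLike.ofReal ∘ f ∘ hA.eigenvalues)
      : Matrix (Fin n) (Fin n) ℂ).IsHermitian := by
    have hst : star (RCLike.ofReal ∘ f ∘ hA.eigenvalues)
        = (RCLike.ofReal ∘ f ∘ hA.eigenvalues : Fin n → ℂ) := by
      funext i
      simp [Complex.conj_ofReal]
    rw [Matrix.IsHermitian, Matrix.diagonal_conjTranspose, hst]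
  have h := Matrix.isHermitian_mul_mul_conjTranspose
    (↑hA.eigenvectorUnitary : Matrix (Fin n) (Fin n) ℂ) hd
  rwa [← Matrix.star_eq_conjTranspose] at h

/-- eigenvalue inequality for concave decreasing superquadratic functions
and a pair `C, D` with `C*C + D*D = I`. -/
theorem eigenvalue_superquadratic_pair {n : ℕ} (f : ℝ → ℝ) (hf : Superquadratic f)
    (hconc : ConcaveOn ℝ (Set.Ici (0 : ℝ)) f) (hdec : AntitoneOn f (Set.Ici (0 : ℝ)))
    (C D : Matrix (Fin n) (Fin n) ℂ) (hCD : Cᴴ * C + Dᴴ * D = 1)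
    (A B : Matrix (Fin n) (Fin n) ℂ) (hA : A.PosSemidef) (hB : B.PosSemidef) (k : Fin n) :
    lkth (mfun f (Cᴴ * A * C + Dᴴ * B * D)) k ≤
      lkth (Cᴴ * mfun f A * C + Dᴴ * mfun f B * D) k -
        f (max (lmax A) (lmax B) - min (lmin A) (lmin B)) := by
  classical
  have hne : Nonempty (Fin n) := ⟨k⟩
  set M0 : ℝ := max (lmax A) (lmax B) with hM0
  set m0 : ℝ := min (lmin A) (lmin B) with hm0
  set M := Cᴴ * A * C + Dᴴ * B * D with hMdef
  have hMps : M.PosSemidef :=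
    (hA.conjTranspose_mul_mul_same C).add (hB.conjTranspose_mul_mul_same D)
  have hM : M.IsHermitian := hMps.isHermitian
  have hmA : mfun f A = hA.1.cfc f := by rw [mfun, dif_pos hA.1]
  have hmB : mfun f B = hB.1.cfc f := by rw [mfun, dif_pos hB.1]
  have hmM : mfun f M = hM.cfc f := by rw [mfun, dif_pos hM]
  set N := Cᴴ * mfun f A * C + Dᴴ * mfun f B * D with hNdef
  have hNh : N.IsHermitian := by
    rw [hNdef, hmA, hmB]
    exact (Matrix.isHermitian_conjTranspose_mul_mul C (aux_cfc_herm hA.1 f)).add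
      (Matrix.isHermitian_conjTranspose_mul_mul D (aux_cfc_herm hB.1 f))
  -- eigenvalue bounds
  have hminA : ∀ i, lmin A ≤ hA.1.eigenvalues i := by
    intro i
    rw [lmin, dif_pos hA.1]
    exact ciInf_le (Set.finite_range _).bddBelow i
  have hminB : ∀ i, lmin B ≤ hB.1.eigenvalues i := by
    intro i
    rw [lmin, dif_pos hB.1]
    exact ciInf_le (Set.finite_range _).bddBelow i
  have hmaxA : ∀ i, hA.1.eigenvalues i ≤ lmax A := by
    intro i
    rw [lmax, dif_pos hA.1]
    exact le_ciSup (Set.finite_range _).bddAbove i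
  have hmaxB : ∀ i, hB.1.eigenvalues i ≤ lmax B := by
    intro i
    rw [lmax, dif_pos hB.1]
    exact le_ciSup (Set.finite_range _).bddAbove i
  have hm0nonneg : 0 ≤ m0 := by
    rw [hm0]
    refine le_min ?_ ?_
    · rw [lmin, dif_pos hA.1]
      exact le_ciInf fun i => hA.eigenvalues_nonneg i
    · rw [lmin, dif_pos hB.1]
      exact le_ciInf fun i => hB.eigenvalues_nonneg i
  have haIcc : ∀ i, hA.1.eigenvalues i ∈ Set.Icc m0 M0 :=
    fun i => ⟨le_trans (min_le_left _ _) (hminA i),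
      le_trans (hmaxA i) (le_max_left _ _)⟩
  have hbIcc : ∀ i, hB.1.eigenvalues i ∈ Set.Icc m0 M0 :=
    fun i => ⟨le_trans (min_le_right _ _) (hminB i),
      le_trans (hmaxB i) (le_max_right _ _)⟩
  -- the quadratic-form inequality for unit vectors
  have key : ∀ x : Fin n → ℂ, (∑ i, normSq (x i)) = 1 →
      (star x ⬝ᵥ (hM.cfc f) *ᵥ x).re + f (M0 - m0) ≤ (star x ⬝ᵥ N *ᵥ x).re := by
    intro x hx
    set y := C *ᵥ x with hy
    set z := D *ᵥ x with hz
    set UA := (hA.1.eigenvectorUnitary : Matrix (Fin n) (Fin n) ℂ) with hUA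
    set UB := (hB.1.eigenvectorUnitary : Matrix (Fin n) (Fin n) ℂ) with hUB
    set UM := (hM.eigenvectorUnitary : Matrix (Fin n) (Fin n) ℂ) with hUM
    set wa : Fin n → ℝ := fun i => normSq ((star UA *ᵥ y) i) with hwa
    set wb : Fin n → ℝ := fun i => normSq ((star UB *ᵥ z) i) with hwb
    set wm : Fin n → ℝ := fun i => normSq ((star UM *ᵥ x) i) with hwm
    -- spectral identities
    have qfA : star y ⬝ᵥ A *ᵥ y = ((∑ i, hA.1.eigenvalues i * wa i : ℝ) : ℂ) := by
      conv_lhs => rw [hA.1.spectral_theorem]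
      exact aux_triple _ _ _
    have qfB : star z ⬝ᵥ B *ᵥ z = ((∑ i, hB.1.eigenvalues i * wb i : ℝ) : ℂ) := by
      conv_lhs => rw [hB.1.spectral_theorem]
      exact aux_triple _ _ _
    have qfM : star x ⬝ᵥ M *ᵥ x = ((∑ i, hM.eigenvalues i * wm i : ℝ) : ℂ) := by
      conv_lhs => rw [hM.spectral_theorem]
      exact aux_triple _ _ _
    have qffA : star y ⬝ᵥ (hA.1.cfc f) *ᵥ y
        = ((∑ i, f (hA.1.eigenvalues i) * wa i : ℝ) : ℂ) := by
      rw [Matrix.IsHermitian.cfc]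
      exact aux_triple UA (f ∘ hA.1.eigenvalues) y
    have qffB : star z ⬝ᵥ (hB.1.cfc f) *ᵥ z
        = ((∑ i, f (hB.1.eigenvalues i) * wb i : ℝ) : ℂ) := by
      rw [Matrix.IsHermitian.cfc]
      exact aux_triple UB (f ∘ hB.1.eigenvalues) z
    have qffM : star x ⬝ᵥ (hM.cfc f) *ᵥ x
        = ((∑ i, f (hM.eigenvalues i) * wm i : ℝ) : ℂ) := by
      rw [Matrix.IsHermitian.cfc]
      exact aux_triple UM (f ∘ hM.eigenvalues) x
    -- mass identities
    have hwa_sum : (∑ i, wa i) = ∑ i, normSq (y i) :=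
      aux_unitary_one hA.1.eigenvectorUnitary.prop y
    have hwb_sum : (∑ i, wb i) = ∑ i, normSq (z i) :=
      aux_unitary_one hB.1.eigenvectorUnitary.prop z
    have hwm_sum : (∑ i, wm i) = 1 := by
      rw [hwm]
      rw [aux_unitary_one hM.eigenvectorUnitary.prop x]
      exact hx
    have hmass : (∑ i, normSq (y i)) + (∑ i, normSq (z i)) = 1 := by
      have e1 : star x ⬝ᵥ (Cᴴ * 1 * C) *ᵥ x = star y ⬝ᵥ y := by
        rw [aux_sandwich, Matrix.one_mulVec]
      have e2 : star x ⬝ᵥ (Dᴴ * 1 * D) *ᵥ x = star z ⬝ᵥ z := by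
        rw [aux_sandwich, Matrix.one_mulVec]
      have e3 : star y ⬝ᵥ y + star z ⬝ᵥ z = star x ⬝ᵥ x := by
        rw [← e1, ← e2, ← dotProduct_add, ← Matrix.add_mulVec, mul_one, mul_one, hCD,
          Matrix.one_mulVec]
      rw [aux_dot_real, aux_dot_real, aux_dot_real] at e3
      have e4 : ((∑ i, normSq (y i)) + (∑ i, normSq (z i)) : ℝ)
          = ((∑ i, normSq (x i)) : ℝ) := by exact_mod_cast e3
      rw [e4, hx]
    -- sandwich decompositions
    have hqN : star x ⬝ᵥ N *ᵥ x
        = star y ⬝ᵥ (hA.1.cfc f) *ᵥ y + star z ⬝ᵥ (hB.1.cfc f) *ᵥ z := by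
      rw [hNdef, hmA, hmB, Matrix.add_mulVec, dotProduct_add, aux_sandwich, aux_sandwich]
    have hqM : star x ⬝ᵥ M *ᵥ x = star y ⬝ᵥ A *ᵥ y + star z ⬝ᵥ B *ᵥ z := by
      rw [hMdef, Matrix.add_mulVec, dotProduct_add, aux_sandwich, aux_sandwich]
    -- the balance: t as convex combination
    have hbal : (∑ i, hM.eigenvalues i * wm i)
        = (∑ i, hA.1.eigenvalues i * wa i) + (∑ i, hB.1.eigenvalues i * wb i) := by
      have := hqM
      rw [qfM, qfA, qfB] at this
      exact_mod_cast this
    -- superquadratic bound on the combined sum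
    set t : ℝ := ∑ i, hM.eigenvalues i * wm i with ht
    have hsuper : f t + f (M0 - m0)
        ≤ (∑ i, f (hA.1.eigenvalues i) * wa i) + (∑ i, f (hB.1.eigenvalues i) * wb i) := by
      have h := aux_superq_bound f hf hdec
        (Sum.elim wa wb) (Sum.elim hA.1.eigenvalues hB.1.eigenvalues)
        (fun l => by cases l <;> simp [hwa, hwb, normSq_nonneg])
        (by rw [Fintype.sum_sum_type]; simp only [Sum.elim_inl, Sum.elim_inr];
            rw [hwa_sum, hwb_sum, hmass])
        m0 M0 hm0nonneg
        (fun l => by cases l with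
          | inl i => simpa using haIcc i
          | inr i => simpa using hbIcc i)
      rw [Fintype.sum_sum_type, Fintype.sum_sum_type] at h
      simp only [Sum.elim_inl, Sum.elim_inr] at h
      calc f t + f (M0 - m0)
          = f ((∑ i, hA.1.eigenvalues i * wa i) + (∑ i, hB.1.eigenvalues i * wb i))
            + f (M0 - m0) := by rw [hbal]
        _ ≤ _ := h
    -- Jensen bound
    have hjen : (∑ i, f (hM.eigenvalues i) * wm i) ≤ f t := by
      rw [ht]
      exact aux_jensen f hconc wm hM.eigenvalues
        (fun i => normSq_nonneg _) hwm_sum (fun i => hMps.eigenvalues_nonneg i)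
    -- put it together
    rw [qffM, hqN, qffA, qffB]
    rw [Complex.ofReal_re, ← Complex.ofReal_add, Complex.ofReal_re]
    linarith
  -- conclude via the eigenvalue comparison lemma
  have main := aux_eig_compare (aux_cfc_herm hM f) hNh (f (M0 - m0)) ?_ k
  · rw [hmM]
    exact main
  · exact key
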